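/- For all integers d ≥ 1 and n ≥ 2, the odd Hadwiger number of the Hamming graph H_n^d (the Cartesian product of d copies of the complete graph K_n) satisfies oh(H_n^d) ≥ d(n − 2) + 2. -/

import Mathlib

open SimpleGraph

/-- `H` is an odd minor of `G`: there are pairwise vertex-disjoint subtrees of `G`, one for
each vertex of `H`, and a 2-colouring of the vertices which is proper on each tree, such that
for every edge of `H` there is a monochromatic edge of `G` between the corresponding trees. -/
def IsOddMinorOf {W V : Type*} (H : SimpleGraph W) (G : SimpleGraph V) : Prop :=
  ∃ (T : W → G.Subgraph) (c : V → Fin 2),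
    (∀ w, (T w).coe.IsTree) ∧
    (Pairwise fun w w' => Disjoint (T w).verts (T w').verts) ∧
    (∀ w, ∀ x y, (T w).Adj x y → c x ≠ c y) ∧
    (∀ w w', H.Adj w w' →
      ∃ x y, x ∈ (T w).verts ∧ y ∈ (T w').verts ∧ G.Adj x y ∧ c x = c y)

/-- The odd Hadwiger number of `G`: the largest `r` such that `K_r` is an odd minor of `G`. -/
noncomputable def oddHadwiger {V : Type*} [Fintype V] (G : SimpleGraph V) : ℕ :=
  sSup {r : ℕ | IsOddMinorOf (⊤ : SimpleGraph (Fin r)) G}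

/-- The Cartesian product `G □ H`. -/
def cartProd {α β : Type*} (G : SimpleGraph α) (H : SimpleGraph β) : SimpleGraph (α × β) where
  Adj x y := (x.1 = y.1 ∧ H.Adj x.2 y.2) ∨ (x.2 = y.2 ∧ G.Adj x.1 y.1)
  symm := by
    constructor
    rintro x y (⟨h1, h2⟩ | ⟨h1, h2⟩)
    · exact Or.inl ⟨h1.symm, h2.symm⟩
    · exact Or.inr ⟨h1.symm, h2.symm⟩
  loopless := by
    constructor
    rintro x (⟨_, h⟩ | ⟨_, h⟩)
    · exact H.irrefl h
    · exact G.irrefl h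

/-- The strong product `G ⊠ H`. -/
def strongProd {α β : Type*} (G : SimpleGraph α) (H : SimpleGraph β) : SimpleGraph (α × β) where
  Adj x y := (x.1 = y.1 ∧ H.Adj x.2 y.2) ∨ (x.2 = y.2 ∧ G.Adj x.1 y.1) ∨
    (G.Adj x.1 y.1 ∧ H.Adj x.2 y.2)
  symm := by
    constructor
    rintro x y (⟨h1, h2⟩ | ⟨h1, h2⟩ | ⟨h1, h2⟩)
    · exact Or.inl ⟨h1.symm, h2.symm⟩
    · exact Or.inr (Or.inl ⟨h1.symm, h2.symm⟩)
    · exact Or.inr (Or.inr ⟨h1.symm, h2.symm⟩)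
  loopless := by
    constructor
    rintro x (⟨_, h⟩ | ⟨_, h⟩ | ⟨h, _⟩)
    · exact H.irrefl h
    · exact G.irrefl h
    · exact G.irrefl h

/-- The lexicographic product `G ∘ H`. -/
def lexProd {α β : Type*} (G : SimpleGraph α) (H : SimpleGraph β) : SimpleGraph (α × β) where
  Adj x y := G.Adj x.1 y.1 ∨ (x.1 = y.1 ∧ H.Adj x.2 y.2)
  symm := by
    constructor
    rintro x y (h | ⟨h1, h2⟩)
    · exact Or.inl h.symm
    · exact Or.inr ⟨h1.symm, h2.symm⟩
  loopless := by
    constructor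
    rintro x (h | ⟨_, h⟩)
    · exact G.irrefl h
    · exact H.irrefl h

/-- The direct (tensor) product `G × H`. -/
def dirProd {α β : Type*} (G : SimpleGraph α) (H : SimpleGraph β) : SimpleGraph (α × β) where
  Adj x y := G.Adj x.1 y.1 ∧ H.Adj x.2 y.2
  symm := by
    constructor
    rintro x y ⟨h1, h2⟩
    exact ⟨h1.symm, h2.symm⟩
  loopless := by
    constructor
    rintro x ⟨h, _⟩
    exact G.irrefl h

/-- The Hamming graph `H_n^d`: vertices are `d`-tuples over an `n`-element alphabet, two
tuples being adjacent iff they differ in exactly one coordinate.  This is the Cartesian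
product of `d` copies of `K_n`. -/
def hamming (d n : ℕ) : SimpleGraph (Fin d → Fin n) where
  Adj x y := x ≠ y ∧ ∀ i j, x i ≠ y i → x j ≠ y j → i = j
  symm := by
    constructor
    rintro x y ⟨h1, h2⟩
    exact ⟨h1.symm, fun i j hi hj => h2 i j hi.symm hj.symm⟩
  loopless := by
    constructor
    rintro x ⟨h1, _⟩
    exact h1 rfl

/-! The branch sets are stars in the Hamming graph, and the colour of a vertex records whether its
Hamming weight is at most one (every centre) or two (every leaf), so it is proper on each star.
Calling the letters `0, 1, a₁, …, a_{n-2}`, the `d(n-2)+2` stars are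
* for each coordinate `i` and letter `a ∉ {0, 1}`, the star centred at `a·eᵢ` whose leaves set one
  further coordinate `j` to a letter `∉ {0, 1}` if `j > i`, and to `1` if `j < i`;
* the single vertex `0`;
* the star centred at `e₀` whose leaves set one further coordinate to `1`.

Two centres with the same support, or one of them `0`, are adjacent and both of weight at most
one. The stars of `(i, a)` and `(i', a')` with `i < i'` meet through the edge between the
weight-two leaves `a·eᵢ + a'·eᵢ'` and `eᵢ + a'·eᵢ'`; similarly the star of `e₀` meets that of
`(i, a)`, `i > 0`, through `e₀ + eᵢ` and `e₀ + a·eᵢ`. The stars are disjoint because every vertex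
of the star of `(i, a)` has letter `a` at `i` and only letters `0, 1` before `i`. -/

section OddMinor

variable {V W W' : Type*} {G : SimpleGraph V}

lemma IsOddMinorOf.of_copy {H : SimpleGraph W} {H' : SimpleGraph W'} (f : Copy H' H)
    (h : IsOddMinorOf H G) : IsOddMinorOf H' G := by
  obtain ⟨T, c, htree, hdisj, hproper, htouch⟩ := h
  exact ⟨T ∘ f, c, fun w => htree _, fun w w' hne => hdisj (f.injective.ne hne),
    fun w => hproper _, fun w w' hadj => htouch _ _ (f.toHom.map_adj hadj)⟩

lemma IsOddMinorOf.card_le [Fintype V] [Fintype W] {H : SimpleGraph W}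
    (h : IsOddMinorOf H G) : Fintype.card W ≤ Fintype.card V := by
  obtain ⟨T, -, htree, hdisj, -, -⟩ := h
  let x : ∀ w, (T w).verts := fun w => (htree w).connected.nonempty.some
  refine Fintype.card_le_of_injective (fun w => x w) fun w w' (hxx : (x w : V) = x w') => ?_
  by_contra hne
  exact Set.disjoint_left.mp (hdisj hne) (x w).2 (hxx ▸ (x w').2)

lemma le_oddHadwiger [Fintype V] [Fintype W] (h : IsOddMinorOf (⊤ : SimpleGraph W) G) :
    Fintype.card W ≤ oddHadwiger G :=
  le_csSup ⟨Fintype.card V, fun _ hr => by simpa using hr.card_le⟩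
    (h.of_copy (Iso.completeGraph (Fintype.equivFin W).symm).toCopy)

namespace SimpleGraph

def starSubgraph (G : SimpleGraph V) (c : V) (L : Set V) (hL : ∀ l ∈ L, G.Adj c l) :
    G.Subgraph where
  verts := insert c L
  Adj x y := x ∈ insert c L ∧ y ∈ insert c L ∧ (starGraph c).Adj x y
  adj_sub := by
    rintro x y ⟨hx, hy, hne, rfl | rfl⟩
    · exact hL y (hy.resolve_left hne.symm)
    · exact (hL x (hx.resolve_left hne)).symm
  edge_vert h := h.1
  symm := ⟨fun _ _ h => ⟨h.2.1, h.1, h.2.2.symm⟩⟩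

lemma coe_starSubgraph (c : V) (L : Set V) (hL : ∀ l ∈ L, G.Adj c l) :
    (G.starSubgraph c L hL).coe = starGraph ⟨c, Set.mem_insert c L⟩ := by
  ext ⟨x, hx⟩ ⟨y, hy⟩
  simp only [Subgraph.coe_adj, starSubgraph, starGraph_adj, ne_eq, Subtype.ext_iff]
  exact ⟨fun h => h.2.2, fun h => ⟨hx, hy, h⟩⟩

lemma isTree_coe_starSubgraph (c : V) (L : Set V) (hL : ∀ l ∈ L, G.Adj c l) :
    (G.starSubgraph c L hL).coe.IsTree := by
  rw [coe_starSubgraph]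
  exact isTree_starGraph _

def Touches (G : SimpleGraph V) (c : V → Fin 2) (A B : Set V) : Prop :=
  ∃ x ∈ A, ∃ y ∈ B, G.Adj x y ∧ c x = c y

lemma Touches.symm {c : V → Fin 2} {A B : Set V} (h : G.Touches c A B) : G.Touches c B A := by
  obtain ⟨x, hx, y, hy, hxy, hc⟩ := h
  exact ⟨y, hy, x, hx, hxy.symm, hc.symm⟩

end SimpleGraph

lemma isOddMinorOf_of_stars {H : SimpleGraph W} (centre : W → V) (leaves : W → Set V)
    (c : V → Fin 2) (hadj : ∀ w, ∀ x ∈ leaves w, G.Adj (centre w) x)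
    (hcol : ∀ w, ∀ x ∈ leaves w, c x ≠ c (centre w))
    (hdisj : Pairwise fun w w' =>
      Disjoint (insert (centre w) (leaves w)) (insert (centre w') (leaves w')))
    (htouch : ∀ w w', H.Adj w w' →
      G.Touches c (insert (centre w) (leaves w)) (insert (centre w') (leaves w'))) :
    IsOddMinorOf H G := by
  refine ⟨fun w => G.starSubgraph (centre w) (leaves w) (hadj w), c,
    fun w => isTree_coe_starSubgraph _ _ _, hdisj, ?_, fun w w' h => ?_⟩
  · rintro w x y ⟨hx, hy, hne, rfl | rfl⟩
    · exact (hcol w y (hy.resolve_left hne.symm)).symm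
    · exact hcol w x (hx.resolve_left hne)
  · obtain ⟨x, hx, y, hy, hxy, hc⟩ := htouch w w' h
    exact ⟨x, y, hx, hy, hxy, hc⟩

end OddMinor

section HammingNorm

variable {ι β : Type*} [Fintype ι] [Zero β] [DecidableEq β]

lemma hammingNorm_single_le_one [DecidableEq ι] (i : ι) (a : β) :
    hammingNorm (Pi.single i a : ι → β) ≤ 1 := by
  refine Finset.card_le_one.2 fun j hj k hk => ?_
  simp only [Finset.mem_filter, Finset.mem_univ, true_and, Pi.single_apply, ne_eq,
    ite_eq_right_iff, not_forall] at hj hk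
  exact hj.1.trans hk.1.symm

lemma one_lt_hammingNorm {x : ι → β} {i j : ι} (hij : i ≠ j) (hi : x i ≠ 0) (hj : x j ≠ 0) :
    1 < hammingNorm x :=
  Finset.one_lt_card.2 ⟨i, by simpa using hi, j, by simpa using hj, hij⟩

def weightColoring (x : ι → β) : Fin 2 := if 1 < hammingNorm x then 1 else 0

end HammingNorm

lemma hamming_adj_iff {d n : ℕ} {x y : Fin d → Fin n} :
    (hamming d n).Adj x y ↔ ∃ i, x i ≠ y i ∧ ∀ j ≠ i, x j = y j := by
  constructor
  · rintro ⟨hne, hone⟩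
    obtain ⟨i, hi⟩ := Function.ne_iff.1 hne
    exact ⟨i, hi, fun j hj => by_contra fun h => hj (hone j i h hi)⟩
  · rintro ⟨i, hi, heq⟩
    refine ⟨fun h => hi (congrFun h i), fun j k hj hk => ?_⟩
    rw [not_imp_comm.1 (heq j) hj, not_imp_comm.1 (heq k) hk]

open Function

section Construction

variable {d m : ℕ}

abbrev HammingBranch (d m : ℕ) := Fin (d + 1) × Fin m ⊕ Bool

def branchCentre : HammingBranch d m → Fin (d + 1) → Fin (m + 2)
  | .inl (i, k) => Pi.single i (k.addNat 2)
  | .inr false => 0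
  | .inr true => Pi.single 0 1

def branchMoves : HammingBranch d m → Set (Fin (d + 1) × Fin (m + 2))
  | .inl (i, _) => {p | i < p.1 ∧ 1 < p.2 ∨ p.1 < i ∧ p.2 = 1}
  | .inr false => ∅
  | .inr true => {p | p.1 ≠ 0 ∧ p.2 = 1}

def branchLeaves (w : HammingBranch d m) : Set (Fin (d + 1) → Fin (m + 2)) :=
  {x | ∃ j b, (j, b) ∈ branchMoves w ∧ x = update (branchCentre w) j b}

def branch (w : HammingBranch d m) : Set (Fin (d + 1) → Fin (m + 2)) :=
  insert (branchCentre w) (branchLeaves w)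

lemma one_lt_addNat_two (k : Fin m) : (1 : Fin (m + 2)) < k.addNat 2 := by
  simp [Fin.lt_def]

lemma support_of_mem_branchMoves {w : HammingBranch d m} {j : Fin (d + 1)} {b : Fin (m + 2)}
    (h : (j, b) ∈ branchMoves w) :
    b ≠ 0 ∧ branchCentre w j = 0 ∧ ∃ i ≠ j, branchCentre w i ≠ 0 := by
  rcases w with ⟨i, k⟩ | _ | _
  · have hji : j ≠ i := by rintro rfl; simp [branchMoves] at h
    refine ⟨?_, by simp [branchCentre, hji], i, hji.symm, by
      simpa [branchCentre] using (Fin.zero_lt_one.trans (one_lt_addNat_two k)).ne'⟩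
    rintro rfl
    simp [branchMoves] at h
  · simp [branchMoves] at h
  · simp only [branchMoves, Set.mem_ofPred_eq] at h
    obtain ⟨hj, rfl⟩ := h
    exact ⟨one_ne_zero, by simp [branchCentre, hj], 0, hj.symm, by simp [branchCentre]⟩

lemma hamming_adj_branchCentre {w : HammingBranch d m} {x : Fin (d + 1) → Fin (m + 2)}
    (hx : x ∈ branchLeaves w) : (hamming (d + 1) (m + 2)).Adj (branchCentre w) x := by
  obtain ⟨j, b, h, rfl⟩ := hx
  obtain ⟨hb, hj, -⟩ := support_of_mem_branchMoves h
  exact hamming_adj_iff.2 ⟨j, by rw [update_self, hj]; exact hb.symm,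
    fun i hi => (update_of_ne hi b (branchCentre w)).symm⟩

lemma weightColoring_branchCentre (w : HammingBranch d m) :
    weightColoring (branchCentre w) = 0 := by
  have : hammingNorm (branchCentre w) ≤ 1 := by
    rcases w with ⟨i, k⟩ | _ | _ <;> simp [branchCentre, hammingNorm_single_le_one]
  simp [weightColoring, this.not_gt]

lemma weightColoring_of_mem_branchLeaves {w : HammingBranch d m} {x : Fin (d + 1) → Fin (m + 2)}
    (hx : x ∈ branchLeaves w) : weightColoring x = 1 := by
  obtain ⟨j, b, h, rfl⟩ := hx
  obtain ⟨hb, -, i, hij, hi⟩ := support_of_mem_branchMoves h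
  rw [weightColoring, if_pos]
  exact one_lt_hammingNorm hij (by rwa [update_of_ne hij]) (by rwa [update_self])

lemma mem_branch_inl {i : Fin (d + 1)} {k : Fin m} {x : Fin (d + 1) → Fin (m + 2)}
    (hx : x ∈ branch (.inl (i, k))) : x i = k.addNat 2 ∧ ∀ j < i, x j ≤ 1 := by
  rcases hx with rfl | ⟨j, b, h, rfl⟩
  · exact ⟨by simp [branchCentre], fun j hj => by simp [branchCentre, hj.ne]⟩
  · simp only [branchMoves, Set.mem_ofPred_eq] at h
    have hji : j ≠ i := by rintro rfl; simp at h
    refine ⟨by simp [branchCentre, hji.symm], fun l hl => ?_⟩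
    rcases eq_or_ne l j with rfl | hlj
    · rcases h with h | h
      · exact absurd (hl.trans h.1) (lt_irrefl l)
      · simp [h.2]
    · simp [branchCentre, hlj, hl.ne]

lemma mem_branch_inr {t : Bool} {x : Fin (d + 1) → Fin (m + 2)} (hx : x ∈ branch (.inr t)) :
    ∀ j, x j ≤ 1 := by
  intro j
  rcases hx with rfl | ⟨l, b, h, rfl⟩
  · cases t <;> simp [branchCentre, Pi.single_apply, apply_ite (· ≤ (1 : Fin (m + 2)))]
  · cases t
    · simp [branchMoves] at h
    · simp only [branchMoves, Set.mem_ofPred_eq] at h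
      simp [branchCentre, update_apply, Pi.single_apply, h.2, apply_ite (· ≤ (1 : Fin (m + 2)))]

lemma branch_inr_false : branch (.inr false : HammingBranch d m) = {0} := by
  simp [branch, branchCentre, branchLeaves, branchMoves]

lemma mem_branch_inr_true {x : Fin (d + 1) → Fin (m + 2)} (hx : x ∈ branch (.inr true)) :
    x 0 = 1 := by
  rcases hx with rfl | ⟨j, b, h, rfl⟩
  · simp [branchCentre]
  · simp only [branchMoves, Set.mem_ofPred_eq] at h
    simp [branchCentre, h.1.symm]

lemma disjoint_branch_inl_of_lt {i i' : Fin (d + 1)} (k k' : Fin m) (h : i < i') :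
    Disjoint (branch (.inl (i, k))) (branch (.inl (i', k'))) := by
  refine Set.disjoint_left.2 fun x hx hx' => ?_
  have hbig := (mem_branch_inl hx).1 ▸ one_lt_addNat_two k
  exact (mem_branch_inl hx').2 i h |>.not_gt hbig

lemma disjoint_branch_inl_inr (p : Fin (d + 1) × Fin m) (t : Bool) :
    Disjoint (branch (.inl p)) (branch (.inr t)) := by
  refine Set.disjoint_left.2 fun x hx hx' => ?_
  have hbig := (mem_branch_inl hx).1 ▸ one_lt_addNat_two p.2
  exact (mem_branch_inr hx' p.1).not_gt hbig

lemma pairwise_disjoint_branch :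
    Pairwise fun w w' : HammingBranch d m => Disjoint (branch w) (branch w') := by
  rintro (⟨i, k⟩ | t) (⟨i', k'⟩ | t') hne
  · rcases lt_trichotomy i i' with h | rfl | h
    · exact disjoint_branch_inl_of_lt k k' h
    · refine Set.disjoint_left.2 fun x hx hx' => hne ?_
      have := (mem_branch_inl hx).1.symm.trans (mem_branch_inl hx').1
      rw [Fin.addNat_inj] at this
      rw [this]
    · exact (disjoint_branch_inl_of_lt k' k h).symm
  · exact disjoint_branch_inl_inr _ _
  · exact (disjoint_branch_inl_inr _ _).symm
  · have hzero : (0 : Fin (d + 1) → Fin (m + 2)) ∉ branch (.inr true) := fun h => by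
      simpa using mem_branch_inr_true h
    cases t <;> cases t' <;> simp only [ne_eq, not_true_eq_false] at hne
    · rwa [branch_inr_false, Set.disjoint_singleton_left]
    · rwa [branch_inr_false, Set.disjoint_singleton_right]

lemma touches_of_adj_branchCentre {w w' : HammingBranch d m}
    (h : (hamming (d + 1) (m + 2)).Adj (branchCentre w) (branchCentre w')) :
    (hamming (d + 1) (m + 2)).Touches weightColoring (branch w) (branch w') :=
  ⟨_, Set.mem_insert _ _, _, Set.mem_insert _ _, h,
    by rw [weightColoring_branchCentre, weightColoring_branchCentre]⟩

lemma touches_of_adj_of_mem_branchLeaves {w w' : HammingBranch d m}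
    {x y : Fin (d + 1) → Fin (m + 2)} (hx : x ∈ branchLeaves w) (hy : y ∈ branchLeaves w')
    (h : (hamming (d + 1) (m + 2)).Adj x y) :
    (hamming (d + 1) (m + 2)).Touches weightColoring (branch w) (branch w') :=
  ⟨x, Or.inr hx, y, Or.inr hy, h,
    by rw [weightColoring_of_mem_branchLeaves hx, weightColoring_of_mem_branchLeaves hy]⟩

lemma touches_branch_inl_inl (i : Fin (d + 1)) {k k' : Fin m} (hk : k ≠ k') :
    (hamming (d + 1) (m + 2)).Touches weightColoring (branch (.inl (i, k)))
      (branch (.inl (i, k'))) :=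
  touches_of_adj_branchCentre <| hamming_adj_iff.2
    ⟨i, by simpa [branchCentre, Fin.addNat_inj] using hk, fun j hj => by simp [branchCentre, hj]⟩

lemma touches_branch_inl_inl_of_lt {i i' : Fin (d + 1)} (k k' : Fin m) (h : i < i') :
    (hamming (d + 1) (m + 2)).Touches weightColoring (branch (.inl (i, k)))
      (branch (.inl (i', k'))) := by
  refine touches_of_adj_of_mem_branchLeaves (w := .inl (i, k)) (w' := .inl (i', k'))
    ⟨i', k'.addNat 2, Or.inl ⟨h, one_lt_addNat_two k'⟩, rfl⟩ ⟨i, 1, Or.inr ⟨h, rfl⟩, rfl⟩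
    (hamming_adj_iff.2 ⟨i, ?_, fun j hj => ?_⟩)
  · simpa [branchCentre, h.ne] using (one_lt_addNat_two k).ne'
  · simp [branchCentre, update_apply, Pi.single_apply, hj]

lemma touches_branch_false_inl (p : Fin (d + 1) × Fin m) :
    (hamming (d + 1) (m + 2)).Touches weightColoring (branch (.inr false)) (branch (.inl p)) :=
  touches_of_adj_branchCentre <| hamming_adj_iff.2
    ⟨p.1, by simpa [branchCentre] using (Fin.zero_lt_one.trans (one_lt_addNat_two p.2)).ne,
      fun j hj => by simp [branchCentre, hj]⟩

lemma touches_branch_false_true :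
    (hamming (d + 1) (m + 2)).Touches weightColoring (branch (.inr false : HammingBranch d m))
      (branch (.inr true)) :=
  touches_of_adj_branchCentre <| hamming_adj_iff.2
    ⟨0, by simp [branchCentre], fun j hj => by simp [branchCentre, hj]⟩

lemma touches_branch_true_inl (p : Fin (d + 1) × Fin m) :
    (hamming (d + 1) (m + 2)).Touches weightColoring (branch (.inr true)) (branch (.inl p)) := by
  obtain ⟨i, k⟩ := p
  rcases eq_or_ne i 0 with rfl | hi
  · exact touches_of_adj_branchCentre <| hamming_adj_iff.2
      ⟨0, by simpa [branchCentre] using (one_lt_addNat_two k).ne, fun j hj => by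
        simp [branchCentre, hj]⟩
  · refine touches_of_adj_of_mem_branchLeaves (w := .inr true) (w' := .inl (i, k))
      ⟨i, 1, ⟨hi, rfl⟩, rfl⟩ ⟨0, 1, Or.inr ⟨Fin.pos_iff_ne_zero.2 hi, rfl⟩, rfl⟩
      (hamming_adj_iff.2 ⟨i, ?_, fun j hj => ?_⟩)
    · simpa [branchCentre, hi] using (one_lt_addNat_two k).ne
    · simp [branchCentre, update_apply, Pi.single_apply, hj]

lemma touches_branch {w w' : HammingBranch d m} (hne : w ≠ w') :
    (hamming (d + 1) (m + 2)).Touches weightColoring (branch w) (branch w') := by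
  rcases w with ⟨i, k⟩ | _ | _ <;> rcases w' with ⟨i', k'⟩ | _ | _
  · rcases lt_trichotomy i i' with h | rfl | h
    · exact touches_branch_inl_inl_of_lt k k' h
    · exact touches_branch_inl_inl i fun hk => hne (hk ▸ rfl)
    · exact (touches_branch_inl_inl_of_lt k' k h).symm
  · exact (touches_branch_false_inl _).symm
  · exact (touches_branch_true_inl _).symm
  · exact touches_branch_false_inl _
  · exact absurd rfl hne
  · exact touches_branch_false_true
  · exact touches_branch_true_inl _
  · exact touches_branch_false_true.symm
  · exact absurd rfl hne

theorem isOddMinorOf_top_hamming :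
    IsOddMinorOf (⊤ : SimpleGraph (HammingBranch d m)) (hamming (d + 1) (m + 2)) :=
  isOddMinorOf_of_stars branchCentre branchLeaves weightColoring
    (fun _ _ => hamming_adj_branchCentre)
    (fun _ _ hx => by
      rw [weightColoring_of_mem_branchLeaves hx, weightColoring_branchCentre]; decide)
    pairwise_disjoint_branch (fun _ _ hne => touches_branch hne)

end Construction

theorem stmt_8 (d n : ℕ) (hd : 1 ≤ d) (hn : 2 ≤ n) :
    oddHadwiger (hamming d n) ≥ d * (n - 2) + 2 := by
  obtain ⟨d, rfl⟩ : ∃ d', d = d' + 1 := ⟨d - 1, by omega⟩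
  obtain ⟨m, rfl⟩ : ∃ m, n = m + 2 := ⟨n - 2, by omega⟩
  simpa using le_oddHadwiger isOddMinorOf_top_hamming
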